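/- Let A be an implication sublattice of B with least element a := min A, and suppose a ≠ 0. Then for any atom c of B with c ≤ a, μ(A, B) = −|a| · μ(A, [c,1]), where μ is the Möbius function of the finite lattice 𝒜 and |a| is the number of atoms of B below a. -/

import Mathlib

open scoped Classical

noncomputable section

/-- An implication sublattice of a Boolean algebra `B`: a nonempty subset closed under
the implication `x → y := xᶜ ⊔ y` and under meet. -/
def IsImplSublattice {B : Type*} [BooleanAlgebra B] (A : Set B) : Prop :=
  A.Nonempty ∧ (∀ x ∈ A, ∀ y ∈ A, xᶜ ⊔ y ∈ A) ∧ (∀ x ∈ A, ∀ y ∈ A, x ⊓ y ∈ A)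

/-- A Boolean subalgebra of `B`: a subset containing `⊥` and `⊤`, closed under
join, meet and complement. -/
def IsBoolSubalgebra {B : Type*} [BooleanAlgebra B] (C : Set B) : Prop :=
  (⊥ : B) ∈ C ∧ (⊤ : B) ∈ C ∧ (∀ x ∈ C, ∀ y ∈ C, x ⊔ y ∈ C) ∧
    (∀ x ∈ C, ∀ y ∈ C, x ⊓ y ∈ C) ∧ (∀ x ∈ C, xᶜ ∈ C)

/-- The lattice `𝒜` of implication sublattices of `B`, ordered by inclusion. -/
abbrev ImplLat (B : Type*) [BooleanAlgebra B] : Type _ := {A : Set B // IsImplSublattice A}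

/-- Any finite preorder is locally finite. -/
instance (priority := 100) fintypeLocallyFinite {X : Type*} [Fintype X] [Preorder X] :
    LocallyFiniteOrder X :=
  Fintype.toLocallyFiniteOrder

lemma isImplSublattice_univ {B : Type*} [BooleanAlgebra B] :
    IsImplSublattice (Set.univ : Set B) :=
  ⟨⟨⊤, trivial⟩, fun _ _ _ _ => trivial, fun _ _ _ _ => trivial⟩

lemma isImplSublattice_Ici {B : Type*} [BooleanAlgebra B] (c : B) :
    IsImplSublattice (Set.Ici c) :=
  ⟨⟨c, le_refl c⟩, fun _ _ _ hy => le_sup_of_le_right hy, fun _ hx _ hy => le_inf hx hy⟩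

lemma isImplSublattice_singleton_top {B : Type*} [BooleanAlgebra B] :
    IsImplSublattice ({⊤} : Set B) := by
  refine ⟨⟨⊤, rfl⟩, ?_, ?_⟩ <;> intro x hx y hy <;> simp_all

/-- `|x|`: the number of atoms of `B` lying below `x`. -/
def natomsBelow {B : Type*} [BooleanAlgebra B] [Fintype B] (x : B) : ℕ :=
  (Finset.univ.filter fun c : B => IsAtom c ∧ c ≤ x).card

/-!
By Weisner's theorem in `𝒜`, applied to `A` and `z = {⊥, ⊤}` (which is not below `A` because
`a ≠ ⊥`), the values `μ(A, X)` sum to zero over the `X ⊇ A` with `X ⊔ z = B`. Joining with `z`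
means passing to the Boolean subalgebra generated by `X`, and this is all of `B` exactly when
`X = B` or `X = [e, 1]` for an atom `e ≤ a`: such an `X` has to separate the atoms of `B`, which
forces its least element to be an atom `e` and every element above `e` to lie in `X`. Finally,
exchanging two atoms below `a` is an automorphism of `B` fixing `A` pointwise, so all the
`μ(A, [e, 1])` with `e ≤ a` coincide.
-/

open Finset IncidenceAlgebra

namespace IsAtom

variable {B : Type*} [BooleanAlgebra B] {c x y : B}

protected lemma le_sup_iff (hc : IsAtom c) : c ≤ x ⊔ y ↔ c ≤ x ∨ c ≤ y := by
  simp only [← not_iff_not, not_or, hc.not_le_iff_disjoint, disjoint_sup_right]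

protected lemma le_compl_iff (hc : IsAtom c) : c ≤ xᶜ ↔ ¬c ≤ x := by
  rw [le_compl_iff_disjoint_right, hc.not_le_iff_disjoint]

end IsAtom

section Separation

variable {B : Type*} [Fintype B] [BooleanAlgebra B] {X : Set B} {x : B}

lemma InfClosed.mem_of_forall_isAtom_not_le (hX : InfClosed X) (htop : ⊤ ∈ X)
    (h : ∀ f, IsAtom f → ¬f ≤ x → ∃ s ∈ X, x ≤ s ∧ ¬f ≤ s) : x ∈ X := by
  have hne : ({s | s ∈ X ∧ x ≤ s} : Finset B).Nonempty := ⟨⊤, by simp [htop]⟩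
  convert hX.finsetInf'_mem hne (f := id) fun s hs => (mem_filter.1 hs).2.1
  refine le_antisymm (le_inf' _ _ fun s hs => (mem_filter.1 hs).2.2) ?_
  refine BooleanAlgebra.le_iff_atom_le_imp.2 fun f hf hfm => ?_
  by_contra hfx
  obtain ⟨s, hsX, hxs, hfs⟩ := h f hf hfx
  exact hfs (hfm.trans (inf'_le _ (by simp [hsX, hxs])))

lemma SupClosed.mem_of_forall_isAtom_le (hX : SupClosed X) (hx : x ≠ ⊥)
    (h : ∀ g, IsAtom g → g ≤ x → ∃ s ∈ X, g ≤ s ∧ s ≤ x) : x ∈ X := by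
  obtain ⟨g, hg, hgx⟩ := (eq_bot_or_exists_atom_le x).resolve_left hx
  obtain ⟨s₀, hs₀X, -, hs₀x⟩ := h g hg hgx
  have hne : ({s | s ∈ X ∧ s ≤ x} : Finset B).Nonempty := ⟨s₀, by simp [hs₀X, hs₀x]⟩
  convert hX.finsetSup'_mem hne (f := id) fun s hs => (mem_filter.1 hs).2.1
  refine le_antisymm ?_ (sup'_le _ _ fun s hs => (mem_filter.1 hs).2.2)
  refine BooleanAlgebra.le_iff_atom_le_imp.2 fun g hg hgx => ?_
  obtain ⟨s, hsX, hgs, hsx⟩ := h g hg hgx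
  exact hgs.trans (le_sup' id (by simp [hsX, hsx]))

end Separation

namespace IncidenceAlgebra

variable {𝕜 α : Type*} [Ring 𝕜] [PartialOrder α] [LocallyFiniteOrder α] [DecidableEq α]

/-- Weisner's theorem. -/
theorem sum_mu_filter_join_eq_top [OrderTop α] {a z : α} (hza : ¬z ≤ a) (join : α → α)
    (hjoin : ∀ x y, join x ≤ y ↔ x ≤ y ∧ z ≤ y) :
    ∑ x ∈ Icc a ⊤ with join x = ⊤, mu 𝕜 a x = 0 := calc
  _ = ∑ x ∈ Icc a ⊤, ∑ y ∈ Icc (join x) ⊤, mu 𝕜 a x * mu 𝕜 y ⊤ := by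
    rw [sum_filter]
    refine sum_congr rfl fun x _ => ?_
    rw [← mul_sum, sum_Icc_mu_left, mul_ite, mul_one, mul_zero]
  _ = ∑ y ∈ Icc z ⊤, ∑ x ∈ Icc a y, mu 𝕜 a x * mu 𝕜 y ⊤ := by
    refine sum_comm' fun x y => ?_
    simp only [mem_Icc, le_top, and_true, hjoin]
    tauto
  _ = 0 := sum_eq_zero fun y hy => by
    rw [← sum_mul, sum_Icc_mu_right, if_neg (by rintro rfl; exact hza (mem_Icc.1 hy).1),
      zero_mul]

theorem mu_orderIso_apply {β : Type*} [PartialOrder β] [LocallyFiniteOrder β] [DecidableEq β]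
    (e : α ≃o β) (a b : α) : mu 𝕜 (e a) (e b) = mu 𝕜 a b := by
  let g : IncidenceAlgebra 𝕜 α := ⟨fun a b => mu 𝕜 (e a) (e b),
    fun a b hab => apply_eq_zero_of_not_le (by simpa using hab) _⟩
  suffices g = mu 𝕜 from congr($this a b)
  suffices g * zeta 𝕜 = 1 by
    rw [← mu_mul_zeta] at this
    apply_fun (· * mu 𝕜) at this
    simpa [mul_assoc, zeta_mul_mu] using this
  ext a b
  simp only [mul_boole, one_apply, mul_apply, zeta_apply]
  calc ∑ x ∈ Icc a b, (if x ≤ b then g a x else 0)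
      = ∑ x ∈ Icc a b, mu 𝕜 (e a) (e x) :=
        sum_congr rfl fun x hx => if_pos (mem_Icc.1 hx).2
    _ = ∑ y ∈ Icc (e a) (e b), mu 𝕜 (e a) y := sum_equiv e.toEquiv (by simp) fun _ _ => rfl
    _ = if a = b then 1 else 0 := by simp [sum_Icc_mu_right]

end IncidenceAlgebra

namespace IsImplSublattice

variable {B B' : Type*} [BooleanAlgebra B] [BooleanAlgebra B'] {A : Set B}

lemma top_mem (hA : IsImplSublattice A) : ⊤ ∈ A := by
  obtain ⟨x, hx⟩ := hA.1
  simpa using hA.2.1 x hx x hx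

lemma infClosed (hA : IsImplSublattice A) : InfClosed A := hA.2.2

lemma supClosed (hA : IsImplSublattice A) : SupClosed A := fun x hx y hy => by
  simpa [sup_inf_right] using hA.2.1 _ (hA.2.1 x hx y hy) y hy

lemma exists_isLeast [Fintype B] (hA : IsImplSublattice A) : ∃ a, IsLeast A a := by
  have hne : A.toFinset.Nonempty := by simpa using hA.1
  exact ⟨A.toFinset.inf' hne id, hA.infClosed.finsetInf'_mem hne (by simp),
    fun t ht => inf'_le id (Set.mem_toFinset.2 ht)⟩

lemma image (hA : IsImplSublattice A) (σ : B ≃o B') : IsImplSublattice (σ '' A) := by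
  refine ⟨hA.1.image σ, ?_, ?_⟩ <;> rintro _ ⟨x, hx, rfl⟩ _ ⟨y, hy, rfl⟩
  · exact ⟨xᶜ ⊔ y, hA.2.1 x hx y hy, by rw [map_sup, map_compl']⟩
  · exact ⟨x ⊓ y, hA.2.2 x hx y hy, map_inf σ x y⟩

end IsImplSublattice

lemma isImplSublattice_setOf_le_iff_le {B : Type*} [BooleanAlgebra B] {e f : B}
    (he : IsAtom e) (hf : IsAtom f) : IsImplSublattice {x | e ≤ x ↔ f ≤ x} := by
  refine ⟨⟨⊤, iff_of_true le_top le_top⟩, fun x hx y hy => ?_, fun x hx y hy => ?_⟩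
  · simp only [Set.mem_ofPred_eq, he.le_sup_iff, hf.le_sup_iff, he.le_compl_iff,
      hf.le_compl_iff] at hx hy ⊢
    rw [hx, hy]
  · simp only [Set.mem_ofPred_eq, le_inf_iff] at hx hy ⊢
    rw [hx, hy]

namespace ImplLat

variable {B B' : Type*} [BooleanAlgebra B] [BooleanAlgebra B']

instance : OrderTop (ImplLat B) where
  top := ⟨Set.univ, isImplSublattice_univ⟩
  le_top X := Set.subset_univ X.1

def Ici (c : B) : ImplLat B := ⟨Set.Ici c, isImplSublattice_Ici c⟩

lemma le_Ici_iff {X : ImplLat B} {a c : B} (ha : IsLeast X.1 a) : X ≤ Ici c ↔ c ≤ a :=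
  (le_isGLB_iff ha.isGLB).symm

lemma Ici_ne_top {e : B} (he : IsAtom e) : Ici e ≠ ⊤ := fun h =>
  he.bot_lt.not_ge (show (⊥ : B) ∈ (Ici e).1 by rw [h]; trivial)

lemma Ici_injective : Function.Injective (Ici : B → ImplLat B) := fun _ _ h =>
  Set.Ici_inj.1 (congrArg Subtype.val h)

def span (S : Set B) : ImplLat B :=
  ⟨⋂₀ {Y | IsImplSublattice Y ∧ S ⊆ Y}, by
    refine ⟨⟨⊤, Set.mem_sInter.2 fun Y hY => hY.1.top_mem⟩, fun x hx y hy => ?_,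
      fun x hx y hy => ?_⟩ <;> refine Set.mem_sInter.2 fun Y hY => ?_
    · exact hY.1.2.1 x (hx Y hY) y (hy Y hY)
    · exact hY.1.2.2 x (hx Y hY) y (hy Y hY)⟩

lemma subset_span (S : Set B) : S ⊆ (span S).1 :=
  Set.subset_sInter fun _ hY => hY.2

lemma span_le_iff {S : Set B} {Y : ImplLat B} : span S ≤ Y ↔ S ⊆ Y.1 :=
  ⟨fun h => (subset_span S).trans h, fun h => Set.sInter_subset_of_mem ⟨Y.2, h⟩⟩

lemma span_insert_bot_le_iff (X Y : ImplLat B) :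
    span (insert ⊥ X.1) ≤ Y ↔ X ≤ Y ∧ span {⊥} ≤ Y := by
  simp only [span_le_iff, Set.insert_subset_iff, Set.singleton_subset_iff]
  exact and_comm

def congr (σ : B ≃o B') : ImplLat B ≃o ImplLat B' where
  toEquiv := σ.toEquiv.toOrderIsoSet.toEquiv.subtypeEquiv fun S =>
    ⟨fun hS => hS.image σ, fun hS => by simpa [Set.image_image] using hS.image σ.symm⟩
  map_rel_iff' := σ.toEquiv.toOrderIsoSet.le_iff_le

lemma congr_apply_val (σ : B ≃o B') (X : ImplLat B) : (congr σ X).1 = σ '' X.1 := rfl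

end ImplLat

section Classification

variable {B : Type*} [BooleanAlgebra B] {X : Set B}

def SeparatesAtoms (X : Set B) : Prop :=
  ∀ e f : B, IsAtom e → IsAtom f → (∀ t ∈ X, e ≤ t ↔ f ≤ t) → e = f

lemma separatesAtoms_of_span_insert_bot_eq_top (h : ImplLat.span (insert ⊥ X) = ⊤) :
    SeparatesAtoms X := by
  intro e f he hf heqv
  have hle : ImplLat.span (insert ⊥ X) ≤ ⟨_, isImplSublattice_setOf_le_iff_le he hf⟩ :=
    ImplLat.span_le_iff.2 <|
      Set.insert_subset (iff_of_false he.bot_lt.not_ge hf.bot_lt.not_ge) heqv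
  rw [h] at hle
  exact ((he.le_iff_eq hf.1).1 ((hle (Set.mem_univ e)).1 le_rfl)).symm

lemma SeparatesAtoms.isAtom_of_isLeast [Finite B] {b : B} (hX : SeparatesAtoms X)
    (hb : IsLeast X b) (hb0 : b ≠ ⊥) : IsAtom b := by
  obtain ⟨e, he, heb⟩ := (eq_bot_or_exists_atom_le b).resolve_left hb0
  suffices b ≤ e from le_antisymm this heb ▸ he
  refine BooleanAlgebra.le_iff_atom_le_imp.2 fun f hf hfb => le_of_eq <|
    hX f e hf he fun t ht => iff_of_true (hfb.trans (hb.2 ht)) (heb.trans (hb.2 ht))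

lemma IsImplSublattice.eq_Ici_of_separatesAtoms [Fintype B] {e : B} (hX : IsImplSublattice X)
    (hsep : SeparatesAtoms X) (he : IsAtom e) (hle : IsLeast X e) : X = Set.Ici e := by
  have hseparate (f g : B) (hf : IsAtom f) (hg : IsAtom g) (hfg : f ≠ g) :
      ∃ t ∈ X, ¬(f ≤ t ↔ g ≤ t) := by
    by_contra! h
    exact hfg (hsep f g hf hg h)
  -- `fᶜ` is the join of the elements of `X` avoiding `f`, and each `x ≥ e` the meet of such `fᶜ`
  have hcompl : ∀ f, IsAtom f → f ≠ e → fᶜ ∈ X := by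
    intro f hf hfe
    obtain ⟨t₀, ht₀, hft₀⟩ := hseparate f e hf he hfe
    replace hft₀ : ¬f ≤ t₀ := fun h => hft₀ (iff_of_true h (hle.2 ht₀))
    have hef : e ≤ fᶜ := he.le_compl_iff.2 fun h => hfe ((hf.le_iff_eq he.1).1 h).symm
    refine hX.supClosed.mem_of_forall_isAtom_le (ne_bot_of_le_ne_bot he.1 hef) fun g hg hgf => ?_
    have hgf : g ≠ f := by rintro rfl; exact hg.le_compl_iff.1 hgf le_rfl
    obtain ⟨t, ht, hgft⟩ := hseparate g f hg hf hgf
    by_cases hgt : g ≤ t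
    · refine ⟨t, ht, hgt, le_compl_comm.1 (hf.le_compl_iff.2 fun hft => ?_)⟩
      exact hgft (iff_of_true hgt hft)
    -- now `f ≤ t` and `g ≰ t`, so the implication `t → t₀` contains `g` but not `f`
    · refine ⟨tᶜ ⊔ t₀, hX.2.1 t ht t₀ ht₀, le_sup_of_le_left (hg.le_compl_iff.2 hgt), ?_⟩
      refine le_compl_comm.1 (hf.le_compl_iff.2 fun h => ?_)
      rcases hf.le_sup_iff.1 h with h | h
      · exact hf.le_compl_iff.1 h (not_not.1 fun hft => hgft (iff_of_false hgt hft))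
      · exact hft₀ h
  refine Set.Subset.antisymm hle.2 fun x hex => ?_
  refine hX.infClosed.mem_of_forall_isAtom_not_le hX.top_mem fun f hf hfx => ?_
  refine ⟨fᶜ, hcompl f hf (by rintro rfl; exact hfx hex), ?_, fun h => ?_⟩
  · exact le_compl_comm.1 (hf.le_compl_iff.2 hfx)
  · exact hf.le_compl_iff.1 h le_rfl

theorem ImplLat.span_insert_bot_eq_top_iff [Fintype B] (X : ImplLat B) :
    span (insert ⊥ X.1) = ⊤ ↔ X = ⊤ ∨ ∃ e, IsAtom e ∧ X = Ici e := by
  constructor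
  · intro h
    obtain ⟨b, hb⟩ := X.2.exists_isLeast
    rcases eq_or_ne b ⊥ with rfl | hb0
    · refine Or.inl (top_le_iff.1 ?_)
      rw [← h]
      exact span_le_iff.2 (Set.insert_subset hb.1 subset_rfl)
    · have hsep := separatesAtoms_of_span_insert_bot_eq_top h
      have he := hsep.isAtom_of_isLeast hb hb0
      exact Or.inr ⟨b, he, Subtype.ext (X.2.eq_Ici_of_separatesAtoms hsep he hb)⟩
  · rintro (rfl | ⟨e, he, rfl⟩)
    · exact top_le_iff.1 ((Set.subset_insert _ _).trans (subset_span _))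
    · refine top_le_iff.1 fun x _ => ?_
      have hspan := subset_span (insert ⊥ (Ici e).1)
      by_cases hex : e ≤ x
      · exact hspan (Set.mem_insert_of_mem _ hex)
      · simpa using (span (insert ⊥ (Ici e).1)).2.2.1 xᶜ
          (hspan (Set.mem_insert_of_mem _ (he.le_compl_iff.2 hex))) ⊥ (hspan (Set.mem_insert _ _))

end Classification

section AtomSwap

variable {B : Type*} [Fintype B] [BooleanAlgebra B] (c d : {a : B // IsAtom a})

open CompleteAtomicBooleanAlgebra in
def atomSwap : B ≃o B :=
  letI := Fintype.toCompleteAtomicBooleanAlgebra B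
  toSetOfIsAtom.trans ((Equiv.swap c d).toOrderIsoSet.trans toSetOfIsAtom.symm)

open CompleteAtomicBooleanAlgebra in
lemma atom_le_atomSwap (e : {a : B // IsAtom a}) (x : B) :
    (e : B) ≤ atomSwap c d x ↔ (Equiv.swap c d e : B) ≤ x := by
  let := Fintype.toCompleteAtomicBooleanAlgebra B
  change e ∈ toSetOfIsAtom (toSetOfIsAtom.symm _) ↔ _
  rw [OrderIso.apply_symm_apply]
  simp [Equiv.toOrderIsoSet, toSetOfIsAtom]

lemma atomSwap_apply_of_le_iff {x : B} (hx : (c : B) ≤ x ↔ (d : B) ≤ x) :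
    atomSwap c d x = x := by
  refine BooleanAlgebra.eq_iff_atom_le_iff.2 fun e he => ?_
  rw [atom_le_atomSwap c d ⟨e, he⟩, Equiv.swap_apply_def]
  split_ifs with hc hd
  · subst hc; exact hx.symm
  · subst hd; exact hx
  · rfl

lemma atomSwap_involutive : Function.Involutive (atomSwap c d) := fun x =>
  BooleanAlgebra.eq_iff_atom_le_iff.2 fun e he => by
    rw [atom_le_atomSwap c d ⟨e, he⟩, atom_le_atomSwap, Equiv.swap_apply_self]

lemma image_atomSwap_Ici : atomSwap c d '' Set.Ici (c : B) = Set.Ici (d : B) := by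
  rw [(atomSwap_involutive c d).image_eq_preimage_symm]
  ext x
  exact (atom_le_atomSwap c d c x).trans (by rw [Equiv.swap_apply_left]; rfl)

end AtomSwap

namespace ImplLat

variable {B : Type*} [Fintype B] [BooleanAlgebra B]

lemma mu_Ici_eq_mu_Ici {𝕜 : Type*} [Ring 𝕜] {X : ImplLat B} {a c d : B} (ha : IsLeast X.1 a)
    (hc : IsAtom c) (hd : IsAtom d) (hca : c ≤ a) (hda : d ≤ a) :
    IncidenceAlgebra.mu 𝕜 X (Ici c) = IncidenceAlgebra.mu 𝕜 X (Ici d) := by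
  have hX : congr (atomSwap ⟨c, hc⟩ ⟨d, hd⟩) X = X := by
    refine Subtype.ext ((congr_apply_val _ X).trans (Set.EqOn.image_eq_self fun x hx => ?_))
    have hcx : c ≤ x ↔ d ≤ x := iff_of_true (hca.trans (ha.2 hx)) (hda.trans (ha.2 hx))
    exact atomSwap_apply_of_le_iff ⟨c, hc⟩ ⟨d, hd⟩ hcx
  have hIci : congr (atomSwap ⟨c, hc⟩ ⟨d, hd⟩) (Ici c) = Ici d :=
    Subtype.ext ((congr_apply_val _ _).trans (image_atomSwap_Ici ⟨c, hc⟩ ⟨d, hd⟩))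
  rw [← IncidenceAlgebra.mu_orderIso_apply (congr (atomSwap ⟨c, hc⟩ ⟨d, hd⟩)), hX, hIci]

lemma filter_span_insert_bot_eq_top {X : ImplLat B} {a : B} (ha : IsLeast X.1 a) :
    {Y ∈ Icc X ⊤ | span (insert ⊥ Y.1) = ⊤} =
      insert ⊤ (({e | IsAtom e ∧ e ≤ a} : Finset B).image Ici) := by
  ext Y
  simp only [mem_filter, mem_Icc, le_top, and_true, span_insert_bot_eq_top_iff, mem_insert,
    mem_image, mem_univ, true_and]
  constructor
  · rintro ⟨hXY, rfl | ⟨e, he, rfl⟩⟩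
    · exact Or.inl rfl
    · exact Or.inr ⟨e, ⟨he, (le_Ici_iff ha).1 hXY⟩, rfl⟩
  · rintro (rfl | ⟨e, ⟨he, hea⟩, rfl⟩)
    · exact ⟨le_top, Or.inl rfl⟩
    · exact ⟨(le_Ici_iff ha).2 hea, Or.inr ⟨e, he, rfl⟩⟩

end ImplLat

theorem mu_eq_neg_card_mul_general {B : Type*} [Fintype B] [BooleanAlgebra B]
    (A : Set B) (hA : IsImplSublattice A) (a : B) (ha : IsLeast A a) (ha0 : a ≠ ⊥)
    (c : B) (hc : IsAtom c) (hca : c ≤ a) :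
    IncidenceAlgebra.mu ℤ (⟨A, hA⟩ : ImplLat B) ⟨Set.univ, isImplSublattice_univ⟩ =
      -(natomsBelow a : ℤ) *
        IncidenceAlgebra.mu ℤ (⟨A, hA⟩ : ImplLat B) ⟨Set.Ici c, isImplSublattice_Ici c⟩ := by
  have hbot : ¬ImplLat.span {⊥} ≤ ⟨A, hA⟩ := fun h =>
    ha0 (le_bot_iff.1 (ha.2 (ImplLat.span_le_iff.1 h rfl)))
  have hweisner := sum_mu_filter_join_eq_top (𝕜 := ℤ) hbot _ ImplLat.span_insert_bot_le_iff
  rw [ImplLat.filter_span_insert_bot_eq_top ha,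
    sum_insert (by simp +contextual [ImplLat.Ici_ne_top]), sum_image ImplLat.Ici_injective.injOn,
    sum_congr rfl fun e he => ImplLat.mu_Ici_eq_mu_Ici ha (mem_filter.1 he).2.1 hc
      (mem_filter.1 he).2.2 hca, sum_const, nsmul_eq_mul] at hweisner
  rw [neg_mul]
  exact eq_neg_of_add_eq_zero_left hweisner

/-- Let `A ∈ 𝒜` with least element `a ≠ ⊥`.  Then for any atom `c` of
`B` with `c ≤ a`, `μ(A, B) = −|a| · μ(A, [c,⊤])`, where `μ` is the Möbius function of
the finite lattice `𝒜` and `|a|` is the number of atoms of `B` below `a`. -/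
theorem mu_eq_neg_card_mul {B : Type*} [Fintype B] [BooleanAlgebra B] [Nontrivial B]
    (A : Set B) (hA : IsImplSublattice A) (a : B) (ha : IsLeast A a) (ha0 : a ≠ ⊥)
    (c : B) (hc : IsAtom c) (hca : c ≤ a) :
    IncidenceAlgebra.mu ℤ (⟨A, hA⟩ : ImplLat B) ⟨Set.univ, isImplSublattice_univ⟩ =
      -(natomsBelow a : ℤ) *
        IncidenceAlgebra.mu ℤ (⟨A, hA⟩ : ImplLat B) ⟨Set.Ici c, isImplSublattice_Ici c⟩ :=
  mu_eq_neg_card_mul_general A hA a ha ha0 c hc hca
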